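/- Let 0<s<1 and 1<p<∞ be fixed and let Ω⊂ℝⁿ be a bounded open set such that the embedding W^{s,p}(Ω)⊂L^p(Ω) is compact (e.g. Ω has Lipschitz boundary). Let φ∈L^∞(Ω) be nonnegative with φ not identically zero (∫_Ω φ dx > 0), and let σ>0. Then there exists a constant κ>0 such that λ_s(σ,φ) ≥ κ; equivalently, there exists C>0 such that ∫_Ω |v|^p dx ≤ C[(1/2)∬_{Ω×Ω} |v(x)-v(y)|^p/|x-y|^{n+sp} dx dy + σ∫_Ω |v|^p φ dx] for every v∈W^{s,p}(Ω). -/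

import Mathlib

open MeasureTheory Filter Topology Set

noncomputable section

abbrev Euc (n : ℕ) := EuclideanSpace ℝ (Fin n)

/-- `p`-th power of the Gagliardo seminorm of `u` on `Ω`. -/
def gagliardo (n : ℕ) (s p : ℝ) (Ω : Set (Euc n)) (u : Euc n → ℝ) : ℝ :=
  ∫ z in Ω ×ˢ Ω, |u z.1 - u z.2| ^ p / ‖z.1 - z.2‖ ^ ((n : ℝ) + s * p)

/-- `u` belongs to the fractional Sobolev space `W^{s,p}(Ω)`. -/
def inFracSobolev (n : ℕ) (s p : ℝ) (Ω : Set (Euc n)) (u : Euc n → ℝ) : Prop :=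
  MemLp u (ENNReal.ofReal p) (volume.restrict Ω) ∧
  IntegrableOn
    (fun z : Euc n × Euc n => |u z.1 - u z.2| ^ p / ‖z.1 - z.2‖ ^ ((n : ℝ) + s * p))
    (Ω ×ˢ Ω) volume

/-- Rayleigh quotients for the soft obstacle eigenvalue `λ_s(σ,φ)`. -/
def lambdaSigmaSet (n : ℕ) (s p : ℝ) (Ω : Set (Euc n)) (σ : ℝ) (φ : Euc n → ℝ) : Set ℝ :=
  { r | ∃ u : Euc n → ℝ, inFracSobolev n s p Ω u ∧ 0 < ∫ x in Ω, |u x| ^ p ∧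
      r = (gagliardo n s p Ω u / 2 + σ * ∫ x in Ω, |u x| ^ p * φ x) / ∫ x in Ω, |u x| ^ p }

/-- The soft obstacle eigenvalue `λ_s(σ,φ)`. -/
def lambdaSigma (n : ℕ) (s p : ℝ) (Ω : Set (Euc n)) (σ : ℝ) (φ : Euc n → ℝ) : ℝ :=
  sInf (lambdaSigmaSet n s p Ω σ φ)

/-- The embedding `W^{s,p}(Ω) ⊆ L^p(Ω)` is compact: every sequence bounded in the
`W^{s,p}(Ω)`-norm has a subsequence converging strongly in `L^p(Ω)`. -/
def CompactEmbeddingWsp (n : ℕ) (s p : ℝ) (Ω : Set (Euc n)) : Prop :=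
  ∀ (u : ℕ → Euc n → ℝ) (M : ℝ),
    (∀ k, inFracSobolev n s p Ω (u k)) →
    (∀ k, (∫ x in Ω, |u k x| ^ p) + gagliardo n s p Ω (u k) ≤ M) →
    ∃ (v : Euc n → ℝ) (φ : ℕ → ℕ),
      MemLp v (ENNReal.ofReal p) (volume.restrict Ω) ∧ StrictMono φ ∧
      Tendsto (fun k => ∫ x in Ω, |u (φ k) x - v x| ^ p) atTop (𝓝 0)

/-!
Argue by contradiction. Otherwise there are `wₖ ∈ W^{s,p}(Ω)` with `‖wₖ‖_p = 1` and
`[wₖ]^p/2 + σ ∫ |wₖ|^p φ → 0`. By the compact embedding a subsequence converges in `L^p(Ω)`,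
and a further one almost everywhere, to some `V`. Fatou's lemma gives `[V]_{s,p} = 0`, so `V`
is a.e. a constant `c`, and `∫ |c|^p φ = 0`, so `c = 0` because `∫ φ > 0`. But then
`‖wₖ - V‖_p = ‖wₖ‖_p = 1` does not tend to `0`.
-/

section Measure

variable {α : Type*} [MeasurableSpace α] {μ : Measure α}

theorem abs_mul_rpow_of_nonneg {t : ℝ} (ht : 0 ≤ t) (a p : ℝ) :
    |t * a| ^ p = t ^ p * |a| ^ p := by
  rw [abs_mul, abs_of_nonneg ht, Real.mul_rpow ht (abs_nonneg a)]

theorem integral_abs_const_mul_rpow_mul {t : ℝ} (ht : 0 ≤ t) (p : ℝ) (u w : α → ℝ) :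
    ∫ x, |t * u x| ^ p * w x ∂μ = t ^ p * ∫ x, |u x| ^ p * w x ∂μ := by
  simp_rw [abs_mul_rpow_of_nonneg ht, mul_assoc]
  exact integral_const_mul _ _

theorem integral_abs_const_mul_rpow {t : ℝ} (ht : 0 ≤ t) (p : ℝ) (u : α → ℝ) :
    ∫ x, |t * u x| ^ p ∂μ = t ^ p * ∫ x, |u x| ^ p ∂μ := by
  simpa using integral_abs_const_mul_rpow_mul (μ := μ) ht p u fun _ => 1

theorem integrable_abs_rpow_of_memLp {p : ℝ} (hp : 0 < p) {u : α → ℝ}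
    (hu : MemLp u (ENNReal.ofReal p) μ) : Integrable (fun x => |u x| ^ p) μ := by
  simpa [ENNReal.toReal_ofReal hp.le] using
    hu.integrable_norm_rpow (by simpa using hp) ENNReal.ofReal_ne_top

theorem integrable_abs_rpow_mul_of_memLp {p : ℝ} (hp : 0 < p) {u φ : α → ℝ}
    (hu : MemLp u (ENNReal.ofReal p) μ) (hφ : MemLp φ ⊤ μ) :
    Integrable (fun x => |u x| ^ p * φ x) μ :=
  (memLp_one_iff_integrable.2 (integrable_abs_rpow_of_memLp hp hu)).integrable_mul hφ

theorem ae_eq_zero_of_tendsto_integral {F : ℕ → α → ℝ} {f : α → ℝ}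
    (hF : ∀ j, Integrable (F j) μ) (hF0 : ∀ j, 0 ≤ᵐ[μ] F j)
    (hlim : ∀ᵐ x ∂μ, Tendsto (fun j => F j x) atTop (𝓝 (f x)))
    (hint : Tendsto (fun j => ∫ x, F j x ∂μ) atTop (𝓝 0)) : f =ᵐ[μ] 0 := by
  have hf0 : 0 ≤ᵐ[μ] f := by
    filter_upwards [ae_all_iff.2 hF0, hlim] with x hx0 hx
    exact ge_of_tendsto' hx hx0
  have hfatou : ∫⁻ x, ENNReal.ofReal (f x) ∂μ = 0 := by
    refine nonpos_iff_eq_zero.1 ?_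
    calc ∫⁻ x, ENNReal.ofReal (f x) ∂μ
        = ∫⁻ x, liminf (fun j => ENNReal.ofReal (F j x)) atTop ∂μ := by
          refine lintegral_congr_ae ?_
          filter_upwards [hlim] with x hx
          exact ((ENNReal.continuous_ofReal.tendsto _).comp hx).liminf_eq.symm
      _ ≤ liminf (fun j => ∫⁻ x, ENNReal.ofReal (F j x) ∂μ) atTop :=
          lintegral_liminf_le' fun j => (hF j).aemeasurable.ennreal_ofReal
      _ = liminf (fun j => ENNReal.ofReal (∫ x, F j x ∂μ)) atTop := by
          simp_rw [ofReal_integral_eq_lintegral_ofReal (hF _) (hF0 _)]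
      _ = 0 := by
          simpa [Function.comp_def] using ((ENNReal.continuous_ofReal.tendsto 0).comp hint).liminf_eq
  have hf : AEMeasurable f μ :=
    aemeasurable_of_tendsto_metrizable_ae' (fun j => (hF j).aemeasurable) hlim
  filter_upwards [(lintegral_eq_zero_iff' hf.ennreal_ofReal).1 hfatou, hf0] with x hx hx0
  exact le_antisymm (ENNReal.ofReal_eq_zero.1 hx) hx0

theorem exists_subseq_tendsto_ae_of_tendsto_integral_rpow {p : ℝ} (hp : 0 < p)
    {u : ℕ → α → ℝ} {v : α → ℝ}
    (hu : ∀ k, MemLp (u k) (ENNReal.ofReal p) μ) (hv : MemLp v (ENNReal.ofReal p) μ)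
    (hlim : Tendsto (fun k => ∫ x, |u k x - v x| ^ p ∂μ) atTop (𝓝 0)) :
    ∃ θ : ℕ → ℕ, StrictMono θ ∧ ∀ᵐ x ∂μ, Tendsto (fun j => u (θ j) x) atTop (𝓝 (v x)) := by
  have hp0 : ENNReal.ofReal p ≠ 0 := by simpa using hp
  refine (tendstoInMeasure_of_tendsto_eLpNorm hp0 (fun k => (hu k).1) hv.1 ?_).exists_seq_tendsto_ae
  have hroot : Tendsto (fun k => ENNReal.ofReal ((∫ x, |u k x - v x| ^ p ∂μ) ^ p⁻¹)) atTop
      (𝓝 (ENNReal.ofReal (0 ^ p⁻¹))) :=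
    (ENNReal.continuous_ofReal.tendsto _).comp (hlim.rpow_const (Or.inr (inv_nonneg.2 hp.le)))
  rw [Real.zero_rpow (inv_ne_zero hp.ne'), ENNReal.ofReal_zero] at hroot
  refine hroot.congr fun k => ?_
  rw [((hu k).sub hv).eLpNorm_eq_integral_rpow_norm hp0 ENNReal.ofReal_ne_top,
    ENNReal.toReal_ofReal hp.le]
  simp [Real.norm_eq_abs]

theorem exists_ae_eq_const_of_ae_prod_eq {β : Type*} [Nonempty β] [SFinite μ] {f : α → β}
    (h : ∀ᵐ z ∂μ.prod μ, f z.1 = f z.2) : ∃ c, f =ᵐ[μ] fun _ => c := by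
  rcases eq_zero_or_neZero μ with rfl | _
  · exact ⟨Classical.arbitrary β, by simp [Filter.EventuallyEq]⟩
  obtain ⟨x₀, hx₀⟩ := (Measure.ae_ae_of_ae_prod h).exists
  exact ⟨f x₀, hx₀.mono fun _ hx => hx.symm⟩

theorem eq_zero_of_ae_abs_rpow_mul_eq_zero {p : ℝ} {φ V : α → ℝ} (hφ : 0 < ∫ x, φ x ∂μ)
    {c : ℝ} (hc : V =ᵐ[μ] fun _ => c) (hVφ : (fun x => |V x| ^ p * φ x) =ᵐ[μ] 0) : c = 0 := by
  by_contra hc0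
  have hφ0 : φ =ᵐ[μ] 0 := by
    filter_upwards [hVφ, hc] with x hx hcx
    rw [hcx] at hx
    exact (mul_eq_zero.1 hx).resolve_left (Real.rpow_pos_of_pos (abs_pos.2 hc0) _).ne'
  exact hφ.ne' (integral_eq_zero_of_ae hφ0)

end Measure

section FractionalSobolev

variable {n : ℕ} {s p : ℝ} {Ω : Set (Euc n)} {σ : ℝ} {φ : Euc n → ℝ}

def gagliardoKernel (n : ℕ) (s p : ℝ) (u : Euc n → ℝ) (z : Euc n × Euc n) : ℝ :=
  |u z.1 - u z.2| ^ p / ‖z.1 - z.2‖ ^ ((n : ℝ) + s * p)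

/-- The numerator of the Rayleigh quotients in `lambdaSigmaSet`. -/
def obstacleEnergy (n : ℕ) (s p : ℝ) (Ω : Set (Euc n)) (σ : ℝ) (φ : Euc n → ℝ)
    (u : Euc n → ℝ) : ℝ :=
  gagliardo n s p Ω u / 2 + σ * ∫ x in Ω, |u x| ^ p * φ x

theorem gagliardo_eq_integral_gagliardoKernel (u : Euc n → ℝ) :
    gagliardo n s p Ω u = ∫ z in Ω ×ˢ Ω, gagliardoKernel n s p u z := rfl

theorem gagliardoKernel_nonneg (u : Euc n → ℝ) (z : Euc n × Euc n) :
    0 ≤ gagliardoKernel n s p u z :=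
  div_nonneg (Real.rpow_nonneg (abs_nonneg _) _) (Real.rpow_nonneg (norm_nonneg _) _)

theorem eq_of_gagliardoKernel_eq_zero (hp : p ≠ 0) {u : Euc n → ℝ} {z : Euc n × Euc n}
    (h : gagliardoKernel n s p u z = 0) : u z.1 = u z.2 := by
  by_cases hz : z.1 = z.2
  · rw [hz]
  rcases div_eq_zero_iff.1 h with h | h
  · exact sub_eq_zero.1 (abs_eq_zero.1 ((Real.rpow_eq_zero (abs_nonneg _) hp).1 h))
  · exact absurd h (Real.rpow_pos_of_pos (norm_pos_iff.2 (sub_ne_zero.2 hz)) _).ne'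

theorem gagliardoKernel_const_mul {t : ℝ} (ht : 0 ≤ t) (u : Euc n → ℝ) :
    gagliardoKernel n s p (fun x => t * u x) = fun z => t ^ p * gagliardoKernel n s p u z := by
  funext z
  rw [gagliardoKernel, gagliardoKernel, ← mul_sub, abs_mul_rpow_of_nonneg ht, mul_div_assoc]

theorem gagliardo_nonneg (u : Euc n → ℝ) : 0 ≤ gagliardo n s p Ω u :=
  integral_nonneg (gagliardoKernel_nonneg u)

theorem gagliardo_const_mul {t : ℝ} (ht : 0 ≤ t) (u : Euc n → ℝ) :
    gagliardo n s p Ω (fun x => t * u x) = t ^ p * gagliardo n s p Ω u := by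
  rw [gagliardo_eq_integral_gagliardoKernel, gagliardo_eq_integral_gagliardoKernel,
    gagliardoKernel_const_mul ht]
  exact integral_const_mul _ _

theorem inFracSobolev.const_mul {u : Euc n → ℝ} (hu : inFracSobolev n s p Ω u) {t : ℝ}
    (ht : 0 ≤ t) : inFracSobolev n s p Ω fun x => t * u x := by
  refine ⟨hu.1.const_mul t, ?_⟩
  change IntegrableOn (gagliardoKernel n s p fun x => t * u x) (Ω ×ˢ Ω) volume
  rw [gagliardoKernel_const_mul ht]
  exact hu.2.const_mul _

theorem integral_abs_rpow_mul_nonneg (hφ0 : ∀ᵐ x ∂volume.restrict Ω, 0 ≤ φ x)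
    (u : Euc n → ℝ) : 0 ≤ ∫ x in Ω, |u x| ^ p * φ x :=
  integral_nonneg_of_ae (hφ0.mono fun _ hx => mul_nonneg (Real.rpow_nonneg (abs_nonneg _) _) hx)

theorem obstacleEnergy_nonneg (hσ : 0 ≤ σ) (hφ0 : ∀ᵐ x ∂volume.restrict Ω, 0 ≤ φ x)
    (u : Euc n → ℝ) : 0 ≤ obstacleEnergy n s p Ω σ φ u :=
  add_nonneg (div_nonneg (gagliardo_nonneg u) zero_le_two)
    (mul_nonneg hσ (integral_abs_rpow_mul_nonneg hφ0 u))

theorem gagliardo_le_two_mul_obstacleEnergy (hσ : 0 ≤ σ)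
    (hφ0 : ∀ᵐ x ∂volume.restrict Ω, 0 ≤ φ x) (u : Euc n → ℝ) :
    gagliardo n s p Ω u ≤ 2 * obstacleEnergy n s p Ω σ φ u := by
  have := mul_nonneg hσ (integral_abs_rpow_mul_nonneg (p := p) hφ0 u)
  rw [obstacleEnergy]
  linarith

theorem integral_abs_rpow_mul_le_obstacleEnergy_div (hσ : 0 < σ) (u : Euc n → ℝ) :
    ∫ x in Ω, |u x| ^ p * φ x ≤ obstacleEnergy n s p Ω σ φ u / σ := by
  rw [le_div_iff₀ hσ, obstacleEnergy]
  linarith [gagliardo_nonneg (n := n) (s := s) (p := p) (Ω := Ω) u]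

theorem obstacleEnergy_const_mul {t : ℝ} (ht : 0 ≤ t) (u : Euc n → ℝ) :
    obstacleEnergy n s p Ω σ φ (fun x => t * u x) = t ^ p * obstacleEnergy n s p Ω σ φ u := by
  rw [obstacleEnergy, obstacleEnergy, gagliardo_const_mul ht,
    integral_abs_const_mul_rpow_mul ht]
  ring

theorem exists_normalized_of_obstacleEnergy_lt (hp : 0 < p) (hσ : 0 ≤ σ)
    (hφ0 : ∀ᵐ x ∂volume.restrict Ω, 0 ≤ φ x) {κ : ℝ} {v : Euc n → ℝ}
    (hv : inFracSobolev n s p Ω v)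
    (hlt : obstacleEnergy n s p Ω σ φ v < κ * ∫ x in Ω, |v x| ^ p) :
    ∃ w, inFracSobolev n s p Ω w ∧ ∫ x in Ω, |w x| ^ p = 1 ∧
      obstacleEnergy n s p Ω σ φ w < κ := by
  set I := ∫ x in Ω, |v x| ^ p
  have hI : 0 < I := by
    have hI0 : 0 ≤ I := integral_nonneg fun _ => Real.rpow_nonneg (abs_nonneg _) _
    refine lt_of_le_of_ne hI0 fun hI => ?_
    rw [← hI, mul_zero] at hlt
    exact hlt.not_ge (obstacleEnergy_nonneg hσ hφ0 v)
  set t := I⁻¹ ^ p⁻¹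
  have ht : 0 ≤ t := Real.rpow_nonneg (inv_nonneg.2 hI.le) _
  have htp : t ^ p = I⁻¹ := by
    rw [← Real.rpow_mul (inv_nonneg.2 hI.le), inv_mul_cancel₀ hp.ne', Real.rpow_one]
  refine ⟨fun x => t * v x, hv.const_mul ht, ?_, ?_⟩
  · rw [integral_abs_const_mul_rpow ht, htp, inv_mul_cancel₀ hI.ne']
  · rw [obstacleEnergy_const_mul ht, htp, inv_mul_lt_iff₀ hI, mul_comm]
    exact hlt

theorem exists_ae_eq_const_of_tendsto_gagliardo (hp : 0 < p) {g : ℕ → Euc n → ℝ}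
    {V : Euc n → ℝ} (hg : ∀ j, inFracSobolev n s p Ω (g j))
    (hlim : ∀ᵐ x ∂volume.restrict Ω, Tendsto (fun j => g j x) atTop (𝓝 (V x)))
    (hgag : Tendsto (fun j => gagliardo n s p Ω (g j)) atTop (𝓝 0)) :
    ∃ c, V =ᵐ[volume.restrict Ω] fun _ => c := by
  have hprod : volume.restrict (Ω ×ˢ Ω) = (volume.restrict Ω).prod (volume.restrict Ω) := by
    rw [Measure.prod_restrict, ← Measure.volume_eq_prod]
  have hlim₂ : ∀ᵐ z ∂volume.restrict (Ω ×ˢ Ω), Tendsto (fun j => gagliardoKernel n s p (g j) z)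
      atTop (𝓝 (gagliardoKernel n s p V z)) := by
    rw [hprod]
    filter_upwards [Measure.quasiMeasurePreserving_fst.ae hlim,
      Measure.quasiMeasurePreserving_snd.ae hlim] with z h₁ h₂
    exact (((h₁.sub h₂).abs).rpow_const (Or.inr hp.le)).div_const _
  have hK := ae_eq_zero_of_tendsto_integral (fun j => (hg j).2)
    (fun j => ae_of_all _ (gagliardoKernel_nonneg (g j))) hlim₂ hgag
  rw [hprod] at hK
  exact exists_ae_eq_const_of_ae_prod_eq (hK.mono fun _ => eq_of_gagliardoKernel_eq_zero hp.ne')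

theorem exists_pos_mul_integral_le_obstacleEnergy (hp : 0 < p)
    (hcomp : CompactEmbeddingWsp n s p Ω) (hφ : MemLp φ ⊤ (volume.restrict Ω))
    (hφ0 : ∀ᵐ x ∂volume.restrict Ω, 0 ≤ φ x) (hφne : 0 < ∫ x in Ω, φ x) (hσ : 0 < σ) :
    ∃ κ : ℝ, 0 < κ ∧ ∀ v, inFracSobolev n s p Ω v →
      κ * ∫ x in Ω, |v x| ^ p ≤ obstacleEnergy n s p Ω σ φ v := by
  by_contra! h
  have : ∀ k : ℕ, ∃ w, inFracSobolev n s p Ω w ∧ ∫ x in Ω, |w x| ^ p = 1 ∧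
      obstacleEnergy n s p Ω σ φ w < 1 / (k + 1) := fun k => by
    obtain ⟨v, hv, hlt⟩ := h _ Nat.one_div_pos_of_nat
    exact exists_normalized_of_obstacleEnergy_lt hp hσ.le hφ0 hv hlt
  choose w hwW hw1 hwE using this
  obtain ⟨V, ψ, hV, hψ, hlim⟩ := hcomp w 3 hwW fun k => by
    have := gagliardo_le_two_mul_obstacleEnergy (s := s) (p := p) hσ.le hφ0 (w k)
    have : (1 : ℝ) / (k + 1) ≤ 1 := (Nat.one_div_le_one_div (Nat.zero_le k)).trans_eq (by simp)
    linarith [hw1 k, hwE k]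
  obtain ⟨θ, hθ, hae⟩ := exists_subseq_tendsto_ae_of_tendsto_integral_rpow hp
    (fun k => (hwW (ψ k)).1) hV hlim
  have hE : Tendsto (fun j => obstacleEnergy n s p Ω σ φ (w (ψ (θ j)))) atTop (𝓝 0) :=
    squeeze_zero (fun _ => obstacleEnergy_nonneg hσ.le hφ0 _) (fun _ => (hwE _).le)
      (tendsto_one_div_add_atTop_nhds_zero_nat.comp (hψ.comp hθ).tendsto_atTop)
  obtain ⟨c, hc⟩ := exists_ae_eq_const_of_tendsto_gagliardo hp (fun _ => hwW _) hae
    (squeeze_zero (fun _ => gagliardo_nonneg _)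
      (fun _ => gagliardo_le_two_mul_obstacleEnergy hσ.le hφ0 _) (by simpa using hE.const_mul 2))
  have hVφ : (fun x => |V x| ^ p * φ x) =ᵐ[volume.restrict Ω] 0 :=
    ae_eq_zero_of_tendsto_integral
      (fun _ => integrable_abs_rpow_mul_of_memLp hp (hwW _).1 hφ)
      (fun _ => hφ0.mono fun _ hx => mul_nonneg (Real.rpow_nonneg (abs_nonneg _) _) hx)
      (hae.mono fun _ hx => (hx.abs.rpow_const (Or.inr hp.le)).mul_const _)
      (squeeze_zero (fun _ => integral_abs_rpow_mul_nonneg hφ0 _)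
        (fun _ => integral_abs_rpow_mul_le_obstacleEnergy_div hσ _) (by simpa using hE.div_const σ))
  have hc0 : c = 0 := eq_zero_of_ae_abs_rpow_mul_eq_zero hφne hc hVφ
  have hdist : ∀ k, ∫ x in Ω, |w (ψ k) x - V x| ^ p = 1 := fun k => by
    rw [← hw1 (ψ k)]
    refine integral_congr_ae ?_
    filter_upwards [hc] with x hx
    simp [hx, hc0]
  simp only [hdist] at hlim
  exact one_ne_zero (tendsto_nhds_unique tendsto_const_nhds hlim)

theorem lambdaSigmaSet_nonempty (hp : 0 < p) (hΩ : volume Ω < ⊤) (hΩ0 : volume Ω ≠ 0) :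
    (lambdaSigmaSet n s p Ω σ φ).Nonempty := by
  have : IsFiniteMeasure (volume.restrict Ω) := isFiniteMeasure_restrict.2 hΩ.ne
  refine ⟨_, fun _ => 1, ⟨memLp_const 1, ?_⟩, ?_, rfl⟩
  · simp [Real.zero_rpow hp.ne', IntegrableOn]
  · simpa [Measure.real] using ENNReal.toReal_pos hΩ0 hΩ.ne

end FractionalSobolev

theorem lambdaSigma_positive_general
    (n : ℕ) (s p : ℝ) (hp : 1 < p)
    (Ω : Set (Euc n)) (hΩb : Bornology.IsBounded Ω)
    (hcomp : CompactEmbeddingWsp n s p Ω)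
    (φ : Euc n → ℝ) (hφ : MemLp φ ⊤ (volume.restrict Ω))
    (hφ0 : ∀ᵐ x ∂(volume.restrict Ω), 0 ≤ φ x) (hφne : 0 < ∫ x in Ω, φ x)
    (σ : ℝ) (hσ : 0 < σ) :
    (∃ κ : ℝ, 0 < κ ∧ κ ≤ lambdaSigma n s p Ω σ φ) ∧
    ∃ C : ℝ, 0 < C ∧ ∀ v : Euc n → ℝ, inFracSobolev n s p Ω v →
      (∫ x in Ω, |v x| ^ p)
        ≤ C * (gagliardo n s p Ω v / 2 + σ * ∫ x in Ω, |v x| ^ p * φ x) := by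
  have hp0 : 0 < p := zero_lt_one.trans hp
  obtain ⟨κ, hκ, hpoincare⟩ :=
    exists_pos_mul_integral_le_obstacleEnergy hp0 hcomp hφ hφ0 hφne hσ
  have hΩ0 : volume Ω ≠ 0 := fun hΩ => by simp [Measure.restrict_eq_zero.2 hΩ] at hφne
  refine ⟨⟨κ, hκ, le_csInf (lambdaSigmaSet_nonempty hp0 hΩb.measure_lt_top hΩ0) ?_⟩,
    κ⁻¹, inv_pos.2 hκ, fun v hv => ?_⟩
  · rintro r ⟨u, hu, hu0, rfl⟩
    exact (le_div_iff₀ hu0).2 (hpoincare u hu)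
  · rw [inv_mul_eq_div, le_div_iff₀ hκ, mul_comm]
    exact hpoincare v hv

/-- The soft obstacle eigenvalue `λ_s(σ,φ)` is bounded below by a positive constant,
equivalently a Poincaré-type inequality holds. -/
theorem lambdaSigma_positive
    (n : ℕ) (s p : ℝ) (hs0 : 0 < s) (hs1 : s < 1) (hp : 1 < p)
    (Ω : Set (Euc n)) (hΩo : IsOpen Ω) (hΩb : Bornology.IsBounded Ω)
    (hcomp : CompactEmbeddingWsp n s p Ω)
    (φ : Euc n → ℝ) (hφ : MemLp φ ⊤ (volume.restrict Ω))
    (hφ0 : ∀ᵐ x ∂(volume.restrict Ω), 0 ≤ φ x) (hφne : 0 < ∫ x in Ω, φ x)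
    (σ : ℝ) (hσ : 0 < σ) :
    (∃ κ : ℝ, 0 < κ ∧ κ ≤ lambdaSigma n s p Ω σ φ) ∧
    ∃ C : ℝ, 0 < C ∧ ∀ v : Euc n → ℝ, inFracSobolev n s p Ω v →
      (∫ x in Ω, |v x| ^ p)
        ≤ C * (gagliardo n s p Ω v / 2 + σ * ∫ x in Ω, |v x| ^ p * φ x) :=
  lambdaSigma_positive_general n s p hp Ω hΩb hcomp φ hφ hφ0 hφne σ hσ
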